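/- Let C₁ ≥ C₂ > 0, ℓ > 0 and r ≥ 0. Let T be a tree with maximum degree Δ(T) ≤ C₁, such that all but at most r vertices of T have degree at most C₂, and such that |V(T)| ≥ ℓ. Then there exist pairwise disjoint vertex sets A₁, …, A_s ⊆ V(T) such that: V(T) = A₁ ∪ ⋯ ∪ A_s; the induced subgraph T[A_i] is connected for each 1 ≤ i ≤ s; ℓ ≤ |A_i| ≤ C₁·ℓ for each 1 ≤ i ≤ r; and ℓ ≤ |A_i| ≤ C₂·ℓ for each r < i ≤ s. -/

import Mathlib

open MeasureTheory Filter

noncomputable section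

/-- The `d`-dimensional hypercube graph `Q^d`, on vertex set `{0,1}^d`. -/
def cubeGraph (d : ℕ) : SimpleGraph (Fin d → Bool) where
  Adj x y := hammingDist x y = 1
  symm := ⟨fun x y h => (hammingDist_comm y x).trans h⟩
  loopless := ⟨fun x h => absurd ((hammingDist_self x).symm.trans h) (by norm_num)⟩

/-- The spanning subgraph of `G` consisting of those edges `e` with `ω e = true`. -/
def percolate {V : Type*} (G : SimpleGraph V) (ω : Sym2 V → Bool) : SimpleGraph V where
  Adj x y := G.Adj x y ∧ ω s(x, y) = true
  symm := by
    constructor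
    rintro x y ⟨h1, h2⟩
    exact ⟨h1.symm, by rwa [Sym2.eq_swap]⟩
  loopless := ⟨fun x h => G.loopless.irrefl x h.1⟩

/-- The Bernoulli measure on `Bool` with success probability `p` (truncated to `[0,1]`). -/
def bernoulliBool (p : ℝ) : Measure Bool :=
  (PMF.bernoulli (min (Real.toNNReal p) 1) (min_le_right _ _)).toMeasure

instance (p : ℝ) : IsProbabilityMeasure (bernoulliBool p) := by
  unfold bernoulliBool; infer_instance

/-- The probability measure on edge-configurations of the `d`-dimensional hypercube in which
each potential edge is retained independently with probability `p`; the configuration space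
is `Sym2 (Fin d → Bool) → Bool`, and `Q^d_p` is `percolate (cubeGraph d) ω`. -/
def cubeMeasure (d : ℕ) (p : ℝ) : Measure (Sym2 (Fin d → Bool) → Bool) :=
  Measure.pi fun _ => bernoulliBool p

/-- `C` is a largest connected component of `H`. -/
def IsLargestComponent {V : Type*} [Fintype V] (H : SimpleGraph V)
    (C : H.ConnectedComponent) : Prop :=
  ∀ C' : H.ConnectedComponent, C'.supp.ncard ≤ C.supp.ncard

/-- The edge boundary of the vertex set `S` in the graph `H`: the set of edges of `H` with
exactly one endpoint in `S`. -/
def edgeBoundary {V : Type*} (H : SimpleGraph V) (S : Set V) : Set (Sym2 V) :=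
  {e | e ∈ H.edgeSet ∧ ∃ x y, e = s(x, y) ∧ x ∈ S ∧ y ∉ S}

/-- The vertex boundary of the vertex set `S` in the graph `H`: the set of vertices outside
`S` having a neighbour in `S`. -/
def vertexBoundary {V : Type*} (H : SimpleGraph V) (S : Set V) : Set V :=
  {v | v ∉ S ∧ ∃ u ∈ S, H.Adj u v}

/-- The survival probability of a Galton–Watson branching process with Poisson(`c`) offspring
distribution: one minus the extinction probability, the extinction probability being the least
fixed point in `[0,1]` of the probability generating function `s ↦ exp (c * (s - 1))` of the
Poisson(`c`) distribution. -/
def poissonSurvival (c : ℝ) : ℝ :=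
  1 - sInf {s : ℝ | s ∈ Set.Icc (0 : ℝ) 1 ∧ Real.exp (c * (s - 1)) = s}

/-- `H` contains a complete minor of order `t`: there are `t` pairwise disjoint connected
branch sets with an edge of `H` between any two of them. -/
def HasCompleteMinor {V : Type*} (H : SimpleGraph V) (t : ℕ) : Prop :=
  ∃ B : Fin t → Set V,
    (∀ i, (H.induce (B i)).Connected) ∧
    (Pairwise fun i j => Disjoint (B i) (B j)) ∧
    (∀ i j, i ≠ j → ∃ x ∈ B i, ∃ y ∈ B j, H.Adj x y)

/-!
Among the connected sets `A ⊆ s` with `|A| ≥ ℓ` whose complement in `s` is still connected,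
take an inclusion-minimal one and a vertex `v ∈ A` adjacent to `s \ A`. A component of `A - v`
with at least `ℓ` vertices would be a smaller such set, so `|A| ≤ 1 + k (ℓ - 1) ≤ deg(v) ℓ`,
where `k ≤ deg v` counts the neighbours of `v` in `A` (and `k < deg v` unless `A = s`).
Cutting off such sets repeatedly (and keeping the whole remainder once it has at most `C₂ ℓ`
vertices, or once cutting would leave fewer than `ℓ`) splits the tree into connected pieces of
size at least `ℓ`, each of size at most `C₂ ℓ` or at most `deg(v) ℓ ≤ C₁ ℓ` for one of its
vertices `v`. A piece larger than `C₂ ℓ` thus contains a vertex of degree above `C₂`; the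
pieces are disjoint, so there are at most `r` of them, and they are listed first.
-/

lemma Nat.one_add_mul_sub_one_le {k m ℓ : ℕ} (hℓ : 0 < ℓ) (hm : 0 < m) (hkm : k ≤ m) :
    1 + k * (ℓ - 1) ≤ m * ℓ := by
  obtain ⟨l, rfl⟩ := Nat.exists_eq_add_of_lt hℓ
  simp only [zero_add, Nat.add_sub_cancel]
  nlinarith

lemma List.Pairwise.pairwise_getElem {α : Type*} {R : α → α → Prop} {l : List α}
    (hR : ∀ {x y}, R x y → R y x) (h : l.Pairwise R) :
    _root_.Pairwise fun i j : Fin l.length => R l[i] l[j] := by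
  intro i j hij
  rcases lt_or_gt_of_ne (Fin.val_ne_of_ne hij) with hlt | hlt
  · exact List.pairwise_iff_getElem.mp h _ _ _ _ hlt
  · exact hR (List.pairwise_iff_getElem.mp h _ _ _ _ hlt)

lemma List.exists_perm_getElem_eq_false_of_length_filter_le {α : Type*} (L : List α)
    (p : α → Bool) : ∃ L' : List α, L'.Perm L ∧
      ∀ (i : ℕ) (hi : i < L'.length), (L.filter p).length ≤ i → p L'[i] = false := by
  refine ⟨L.filter p ++ L.filter (fun a => !p a), List.filter_append_perm _ _, fun i hi hpi => ?_⟩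
  rw [List.getElem_append_right hpi]
  simpa using (List.mem_filter.mp (List.getElem_mem (l := L.filter (fun a => !p a)) _)).2

lemma List.length_le_ncard_of_pairwise_disjoint {α : Type*} {L : List (Set α)} {H : Set α}
    (hH : H.Finite) (hL : L.Pairwise _root_.Disjoint) (hmeet : ∀ A ∈ L, (A ∩ H).Nonempty) :
    L.length ≤ H.ncard := by
  induction L generalizing H with
  | nil => simp
  | cons A L ih =>
    obtain ⟨hAL, hL⟩ := List.pairwise_cons.mp hL
    obtain ⟨x, hxA, hxH⟩ := hmeet A List.mem_cons_self
    have hrest : L.length ≤ (H \ A).ncard := ih hH.sdiff hL fun B hB => by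
      obtain ⟨y, hyB, hyH⟩ := hmeet B (List.mem_cons_of_mem _ hB)
      exact ⟨y, hyB, hyH, fun hyA => Set.disjoint_left.mp (hAL B hB) hyA hyB⟩
    have hdiff : (H \ A).ncard < H.ncard :=
      Set.ncard_lt_ncard (Set.sdiff_subset.ssubset_of_not_subset fun h => (h hxH).2 hxA) hH
    simp only [List.length_cons]
    omega

namespace SimpleGraph

variable {V : Type*} {G : SimpleGraph V} {S A B s : Set V} {u v w x y : V} {ℓ m : ℕ}

lemma ncard_neighborSet_eq_degree [Fintype (G.neighborSet v)] :
    (G.neighborSet v).ncard = G.degree v := by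
  rw [← Nat.card_coe_set_eq, Nat.card_eq_fintype_card, card_neighborSet_eq_degree]

/-- The vertex set of the component of `u` in `G[S]` (empty if `u ∉ S`). -/
def componentWithin (G : SimpleGraph V) (S : Set V) (u : V) : Set V :=
  {w | ∃ p : G.Walk u w, ∀ x ∈ p.support, x ∈ S}

lemma componentWithin_subset : G.componentWithin S u ⊆ S :=
  fun w ⟨p, hp⟩ => hp w p.end_mem_support

lemma mem_componentWithin_self (hu : u ∈ S) : u ∈ G.componentWithin S u :=
  ⟨.nil, by simpa⟩

lemma mem_componentWithin_comm (hw : w ∈ G.componentWithin S u) :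
    u ∈ G.componentWithin S w := by
  obtain ⟨p, hp⟩ := hw
  exact ⟨p.reverse, by simpa using hp⟩

lemma mem_componentWithin_trans (hw : w ∈ G.componentWithin S u)
    (hx : x ∈ G.componentWithin S w) : x ∈ G.componentWithin S u := by
  obtain ⟨p, hp⟩ := hw
  obtain ⟨q, hq⟩ := hx
  refine ⟨p.append q, fun y hy => ?_⟩
  rcases (Walk.mem_support_append_iff p q).mp hy with hy | hy
  exacts [hp y hy, hq y hy]

lemma mem_componentWithin_of_adj (hw : w ∈ G.componentWithin S u) (hx : x ∈ S)
    (hwx : G.Adj w x) : x ∈ G.componentWithin S u :=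
  mem_componentWithin_trans hw ⟨.cons hwx .nil, by simp [hx, componentWithin_subset hw]⟩

lemma disjoint_componentWithin (hx : x ∈ G.componentWithin S w)
    (hxu : x ∉ G.componentWithin S u) :
    Disjoint (G.componentWithin S w) (G.componentWithin S u) :=
  Set.disjoint_left.mpr fun _ hy hy' => hxu <|
    mem_componentWithin_trans (mem_componentWithin_trans hy' (mem_componentWithin_comm hy)) hx

lemma connected_induce_componentWithin (hu : u ∈ S) :
    (G.induce (G.componentWithin S u)).Connected := by
  classical
  refine induce_connected_of_patches u (mem_componentWithin_self hu) fun {w} ⟨p, hp⟩ => ?_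
  refine ⟨{x | x ∈ p.support}, fun x hx => ⟨p.takeUntil x hx, fun y hy => hp y ?_⟩,
    p.start_mem_support, p.end_mem_support, (p.connected_induce_support).preconnected _ _⟩
  exact p.support_takeUntil_subset_support hx hy

lemma exists_adj_of_preconnected_induce (hS : (G.induce S).Preconnected) (hx : x ∈ S ∩ B)
    (hy : y ∈ S \ B) : ∃ a ∈ S ∩ B, ∃ b ∈ S \ B, G.Adj a b := by
  obtain ⟨p⟩ := hS ⟨x, hx.1⟩ ⟨y, hy.1⟩
  obtain ⟨d, -, h₁, h₂⟩ := p.exists_boundary_dart {z | (z : V) ∈ B} hx.2 hy.2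
  exact ⟨d.fst, ⟨d.fst.2, h₁⟩, d.snd, ⟨d.snd.2, h₂⟩, d.adj⟩

lemma exists_mem_forall_adj_sdiff (hs : (G.induce s).Preconnected) (hAs : A ⊆ s)
    (hA : A.Nonempty) : ∃ v ∈ A, (s \ A).Nonempty → ∃ p ∈ s \ A, G.Adj v p := by
  obtain ⟨a, ha⟩ := hA
  rcases (s \ A).eq_empty_or_nonempty with h | ⟨y, hy⟩
  · exact ⟨a, ha, fun h' => absurd h h'.ne_empty⟩
  · obtain ⟨b, ⟨-, hbA⟩, c, hc, hbc⟩ := exists_adj_of_preconnected_induce hs ⟨hAs ha, ha⟩ hy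
    exact ⟨b, hbA, fun _ => ⟨c, hc, hbc⟩⟩

lemma exists_adj_mem_componentWithin (hA : (G.induce A).Preconnected) (hv : v ∈ A)
    (hw : w ∈ A \ {v}) : ∃ a ∈ A, G.Adj v a ∧ w ∈ G.componentWithin (A \ {v}) a := by
  obtain ⟨a, ⟨haA, haw⟩, b, ⟨hbA, hbw⟩, hab⟩ :=
    exists_adj_of_preconnected_induce (B := G.componentWithin (A \ {v}) w) hA
      ⟨hw.1, mem_componentWithin_self hw⟩ ⟨hv, fun h => (componentWithin_subset h).2 rfl⟩
  obtain rfl : b = v := by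
    by_contra hbv
    exact hbw (mem_componentWithin_of_adj haw ⟨hbA, hbv⟩ hab)
  exact ⟨a, haA, hab.symm, mem_componentWithin_comm haw⟩

lemma ncard_le_one_add_ncard_neighborSet_mul [Finite V] (hA : (G.induce A).Preconnected)
    (hv : v ∈ A) (h : ∀ a ∈ A ∩ G.neighborSet v, (G.componentWithin (A \ {v}) a).ncard ≤ m) :
    A.ncard ≤ 1 + (A ∩ G.neighborSet v).ncard * m := by
  set N := A ∩ G.neighborSet v
  have hcover : A \ {v} ⊆ ⋃ a ∈ N.toFinite.toFinset, G.componentWithin (A \ {v}) a := by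
    intro w hw
    obtain ⟨a, haA, hva, hwa⟩ := exists_adj_mem_componentWithin hA hv hw
    exact Set.mem_biUnion (x := a) (by simpa [N] using ⟨haA, hva⟩) hwa
  calc A.ncard = 1 + (A \ {v}).ncard := by rw [← Set.ncard_sdiff_singleton_add_one hv]; ring
    _ ≤ 1 + ∑ a ∈ N.toFinite.toFinset, (G.componentWithin (A \ {v}) a).ncard := by
      gcongr
      exact (Set.ncard_le_ncard hcover).trans (Finset.set_ncard_biUnion_le _ _)
    _ ≤ 1 + N.ncard * m := by
      gcongr
      rw [Set.ncard_eq_toFinset_card N]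
      exact Finset.sum_le_card_nsmul _ _ _ fun a ha => h a (by simpa using ha)

lemma connected_induce_sdiff_componentWithin (hAs : A ⊆ s)
    (hA : (G.induce A).Preconnected) (hsA : (G.induce (s \ A)).Preconnected) (hv : v ∈ A)
    (hvs : (s \ A).Nonempty → ∃ p ∈ s \ A, G.Adj v p) :
    (G.induce (s \ G.componentWithin (A \ {v}) u)).Connected := by
  set R := G.componentWithin (A \ {v}) u
  have hRA : R ⊆ A := componentWithin_subset.trans Set.sdiff_subset
  have hvR : v ∈ s \ R := ⟨hAs hv, fun h => (componentWithin_subset h).2 rfl⟩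
  have hv_pre : (G.induce {v}).Preconnected := Preconnected.of_subsingleton
  -- `x` reaches `v` through its own component of `A - v`, or through `s \ A`.
  refine induce_connected_of_patches v hvR fun {x} hx => ?_
  by_cases hxA : x ∈ A
  · by_cases hxv : x = v
    · subst hxv
      exact ⟨{x}, by simpa using hvR, rfl, rfl, .rfl⟩
    obtain ⟨a, haA, hva, hxa⟩ := exists_adj_mem_componentWithin hA hv ⟨hxA, hxv⟩
    have ha : a ∈ A \ {v} := ⟨haA, hva.ne'⟩
    have hP : {v} ∪ G.componentWithin (A \ {v}) a ⊆ s \ R := by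
      refine Set.union_subset (by simpa using hvR) (Set.subset_sdiff.mpr ⟨?_, ?_⟩)
      · exact (componentWithin_subset.trans Set.sdiff_subset).trans hAs
      · exact disjoint_componentWithin hxa hx.2
    exact ⟨_, hP, Or.inl rfl, Or.inr hxa, (connected_induce_union hv_pre
      (connected_induce_componentWithin ha).preconnected rfl (mem_componentWithin_self ha)
      hva).preconnected _ _⟩
  · obtain ⟨p, hp, hvp⟩ := hvs ⟨x, hx.1, hxA⟩
    have hP : {v} ∪ (s \ A) ⊆ s \ R :=
      Set.union_subset (by simpa using hvR) fun y hy => ⟨hy.1, fun hyR => hy.2 (hRA hyR)⟩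
    exact ⟨_, hP, Or.inl rfl, Or.inr ⟨hx.1, hxA⟩,
      (connected_induce_union hv_pre hsA rfl hp hvp).preconnected _ _⟩

/-- `s \ A` may be empty, hence `Preconnected` rather than `Connected`. -/
def IsDetachable (G : SimpleGraph V) (ℓ : ℕ) (s A : Set V) : Prop :=
  A ⊆ s ∧ (G.induce A).Connected ∧ ℓ ≤ A.ncard ∧ (G.induce (s \ A)).Preconnected

lemma isDetachable_self (hs : (G.induce s).Connected) (hℓs : ℓ ≤ s.ncard) :
    G.IsDetachable ℓ s s :=
  ⟨subset_rfl, hs, hℓs, fun x => (x.2.2 x.2.1).elim⟩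

lemma ncard_componentWithin_lt (hA : Minimal (G.IsDetachable ℓ s) A)
    (hv : v ∈ A) (hvs : (s \ A).Nonempty → ∃ p ∈ s \ A, G.Adj v p) (hu : u ∈ A \ {v}) :
    (G.componentWithin (A \ {v}) u).ncard < ℓ := by
  obtain ⟨hAs, hAconn, -, hsA⟩ := hA.prop
  have hRA : G.componentWithin (A \ {v}) u ⊆ A := componentWithin_subset.trans Set.sdiff_subset
  by_contra! hℓ
  have hR : G.IsDetachable ℓ s (G.componentWithin (A \ {v}) u) :=
    ⟨hRA.trans hAs, connected_induce_componentWithin hu, hℓ,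
      (connected_induce_sdiff_componentWithin hAs hAconn.preconnected hsA hv hvs).preconnected⟩
  exact (componentWithin_subset (hA.le_of_le hR hRA hv)).2 rfl

lemma ncard_le_of_minimal_isDetachable [Finite V] (hA : Minimal (G.IsDetachable ℓ s) A)
    (hv : v ∈ A) (hvs : (s \ A).Nonempty → ∃ p ∈ s \ A, G.Adj v p) :
    A.ncard ≤ 1 + (A ∩ G.neighborSet v).ncard * (ℓ - 1) :=
  ncard_le_one_add_ncard_neighborSet_mul hA.prop.2.1.preconnected hv fun _ ha =>
    Nat.le_sub_one_of_lt (ncard_componentWithin_lt hA hv hvs ⟨ha.1, (G.ne_of_adj ha.2).symm⟩)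

theorem exists_isDetachable_ncard_le_degree_mul [Fintype V] [DecidableRel G.Adj] (hℓ : 0 < ℓ)
    (hs : (G.induce s).Connected) (hℓs : ℓ < s.ncard) :
    ∃ A, G.IsDetachable ℓ s A ∧ (∃ v ∈ A, A.ncard ≤ G.degree v * ℓ) ∧
      (A = s ∨ ℓ ≤ (s \ A).ncard) := by
  have hs_det := isDetachable_self hs hℓs.le
  obtain ⟨A, hA⟩ := exists_minimal_of_wellFoundedLT _ ⟨s, hs_det⟩
  obtain ⟨hAs, hAconn, -, -⟩ := hA.prop
  obtain ⟨v, hvA, hvs⟩ := exists_mem_forall_adj_sdiff hs.preconnected hAs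
    (Set.nonempty_coe_sort.mp hAconn.nonempty)
  set k := (A ∩ G.neighborSet v).ncard
  have hAk : A.ncard ≤ 1 + k * (ℓ - 1) := ncard_le_of_minimal_isDetachable hA hvA hvs
  have hk_deg : k ≤ G.degree v := by
    rw [← ncard_neighborSet_eq_degree]
    exact Set.ncard_le_ncard Set.inter_subset_right
  rcases (s \ A).eq_empty_or_nonempty with hsA | hsA
  · have hAs' : A = s := hAs.antisymm (Set.sdiff_eq_empty.mp hsA)
    have hk : 0 < k := by
      by_contra! hk0
      have : A.ncard ≤ 1 := by simpa [Nat.le_zero.mp hk0] using hAk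
      rw [hAs'] at this
      omega
    exact ⟨A, hA.prop,
      ⟨v, hvA, hAk.trans (Nat.one_add_mul_sub_one_le hℓ (hk.trans_le hk_deg) hk_deg)⟩, .inl hAs'⟩
  · obtain ⟨p, hp, hvp⟩ := hvs hsA
    have hk_lt : k < G.degree v := by
      rw [← ncard_neighborSet_eq_degree]
      exact Set.ncard_lt_ncard (Set.inter_subset_right.ssubset_of_not_subset
        fun h => hp.2 (h hvp).1)
    by_cases hℓ' : ℓ ≤ (s \ A).ncard
    · exact ⟨A, hA.prop,
        ⟨v, hvA, hAk.trans (Nat.one_add_mul_sub_one_le hℓ (by omega) hk_lt.le)⟩, .inr hℓ'⟩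
    · refine ⟨s, hs_det, ⟨v, hAs hvA, ?_⟩, .inl rfl⟩
      calc s.ncard = A.ncard + (s \ A).ncard := by
            rw [add_comm, Set.ncard_sdiff_add_ncard_of_subset hAs]
        _ ≤ 1 + (k + 1) * (ℓ - 1) := by rw [add_one_mul]; omega
        _ ≤ G.degree v * ℓ := Nat.one_add_mul_sub_one_le hℓ (by omega) hk_lt

theorem exists_connected_partition_list [Fintype V] [DecidableRel G.Adj] {C : ℕ}
    (hℓ : 0 < ℓ) (hC : 0 < C) (hs : (G.induce s).Connected) (hℓs : ℓ ≤ s.ncard) :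
    ∃ L : List (Set V), L.Pairwise Disjoint ∧ (∀ x, x ∈ s ↔ ∃ A ∈ L, x ∈ A) ∧
      ∀ A ∈ L, (G.induce A).Connected ∧ ℓ ≤ A.ncard ∧
        (A.ncard ≤ C * ℓ ∨ ∃ v ∈ A, A.ncard ≤ G.degree v * ℓ) := by
  induction hn : s.ncard using Nat.strong_induction_on generalizing s with
  | _ n ih =>
  by_cases hsC : s.ncard ≤ C * ℓ
  · exact ⟨[s], List.pairwise_singleton _ _, by simp, by simpa using ⟨hs, hℓs, .inl hsC⟩⟩
  obtain ⟨A, ⟨hAs, hA, hℓA, hsA⟩, hAdeg, rfl | hℓsA⟩ :=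
    exists_isDetachable_ncard_le_degree_mul hℓ hs (by nlinarith)
  · exact ⟨[A], List.pairwise_singleton _ _, by simp, by simpa using ⟨hs, hℓs, .inr hAdeg⟩⟩
  have hlt : (s \ A).ncard < n := by
    rw [← hn, ← Set.ncard_sdiff_add_ncard_of_subset hAs]
    omega
  have : Nonempty ↥(s \ A) :=
    (Set.nonempty_of_ncard_ne_zero (s := s \ A) (by omega)).to_subtype
  have hsA' : (G.induce (s \ A)).Connected := ⟨hsA⟩
  obtain ⟨L, hL, hcover, hpieces⟩ := ih _ hlt hsA' hℓsA rfl
  refine ⟨A :: L, List.pairwise_cons.mpr ⟨fun B hB => ?_, hL⟩, fun x => ?_,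
    List.forall_mem_cons.mpr ⟨⟨hA, hℓA, .inr hAdeg⟩, hpieces⟩⟩
  · exact Set.disjoint_left.mpr fun x hxA hxB => ((hcover x).mpr ⟨B, hB, hxB⟩).2 hxA
  · by_cases hxA : x ∈ A
    · simp [hxA, hAs hxA]
    · simp [hxA, ← hcover]

end SimpleGraph

theorem tree_decomposition_general {V : Type*} [Fintype V]
    (T : SimpleGraph V) [DecidableRel T.Adj] (hT : T.IsTree)
    (C₁ C₂ ℓ r : ℕ) (hC₂ : 0 < C₂) (hC : C₂ ≤ C₁) (hℓ : 0 < ℓ)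
    (hΔ : ∀ v : V, T.degree v ≤ C₁)
    (hdeg : ({v : V | C₂ < T.degree v}).ncard ≤ r)
    (hcard : ℓ ≤ Fintype.card V) :
    ∃ (s : ℕ) (A : Fin s → Set V),
      (Pairwise fun i j => Disjoint (A i) (A j)) ∧
      (⋃ i, A i) = Set.univ ∧
      (∀ i, (T.induce (A i)).Connected) ∧
      (∀ i, ℓ ≤ (A i).ncard) ∧
      (∀ i : Fin s, (i : ℕ) < r → (A i).ncard ≤ C₁ * ℓ) ∧
      (∀ i : Fin s, r ≤ (i : ℕ) → (A i).ncard ≤ C₂ * ℓ) := by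
  obtain ⟨L, hL, hcover, hpieces⟩ := SimpleGraph.exists_connected_partition_list hℓ hC₂
    ((SimpleGraph.induceUnivIso T).connected_iff.mpr hT.connected)
    (by rwa [Set.ncard_univ, Nat.card_eq_fintype_card])
  have hsize : ∀ A ∈ L, A.ncard ≤ C₁ * ℓ := fun A hA => by
    rcases (hpieces A hA).2.2 with h | ⟨v, -, h⟩
    exacts [h.trans (Nat.mul_le_mul_right ℓ hC), h.trans (Nat.mul_le_mul_right ℓ (hΔ v))]
  let big : Set V → Bool := fun A => C₂ * ℓ < A.ncard
  have hfew : (L.filter big).length ≤ r := by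
    refine (List.length_le_ncard_of_pairwise_disjoint (Set.toFinite _)
      (hL.sublist List.filter_sublist) fun A hA => ?_).trans hdeg
    obtain ⟨hAL, hAbig⟩ := List.mem_filter.mp hA
    replace hAbig : C₂ * ℓ < A.ncard := by simpa [big] using hAbig
    rcases (hpieces A hAL).2.2 with h | ⟨v, hvA, h⟩
    · exact absurd h hAbig.not_ge
    · exact ⟨v, hvA, Nat.lt_of_mul_lt_mul_right (hAbig.trans_le h)⟩
  obtain ⟨L', hperm, hlate⟩ := L.exists_perm_getElem_eq_false_of_length_filter_le big
  have hmem : ∀ i : Fin L'.length, L'[i] ∈ L := fun i => hperm.subset (List.getElem_mem _)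
  refine ⟨L'.length, fun i => L'[i], (hL.perm hperm.symm (·.symm)).pairwise_getElem (·.symm),
    Set.eq_univ_of_forall fun x => ?_, fun i => (hpieces _ (hmem i)).1,
    fun i => (hpieces _ (hmem i)).2.1, fun i _ => hsize _ (hmem i),
    fun i hi => by simpa [big] using hlate i i.2 (hfew.trans hi)⟩
  obtain ⟨A, hA, hxA⟩ := (hcover x).mp trivial
  obtain ⟨i, hi, rfl⟩ := List.mem_iff_getElem.mp (hperm.symm.subset hA)
  exact Set.mem_iUnion.mpr ⟨⟨i, hi⟩, hxA⟩

/-- decomposing a tree of maximum degree at most `C₁`, all but at most `r` of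
whose vertices have degree at most `C₂`, into connected pieces of controlled sizes. -/
theorem tree_decomposition {V : Type*} [Fintype V] [DecidableEq V]
    (T : SimpleGraph V) [DecidableRel T.Adj] (hT : T.IsTree)
    (C₁ C₂ ℓ r : ℕ) (hC₂ : 0 < C₂) (hC : C₂ ≤ C₁) (hℓ : 0 < ℓ)
    (hΔ : ∀ v : V, T.degree v ≤ C₁)
    (hdeg : ({v : V | C₂ < T.degree v}).ncard ≤ r)
    (hcard : ℓ ≤ Fintype.card V) :
    ∃ (s : ℕ) (A : Fin s → Set V),
      (Pairwise fun i j => Disjoint (A i) (A j)) ∧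
      (⋃ i, A i) = Set.univ ∧
      (∀ i, (T.induce (A i)).Connected) ∧
      (∀ i, ℓ ≤ (A i).ncard) ∧
      (∀ i : Fin s, (i : ℕ) < r → (A i).ncard ≤ C₁ * ℓ) ∧
      (∀ i : Fin s, r ≤ (i : ℕ) → (A i).ncard ≤ C₂ * ℓ) :=
  tree_decomposition_general T hT C₁ C₂ ℓ r hC₂ hC hℓ hΔ hdeg hcard

end
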